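/- Suppose ‖x_i‖_1 ≤ R for all i ∈ {1,…,n}, where R > 0, and that n = m·b for integers m ≥ 1 and b ≥ 1. Then for every subset B ⊆ {1,…,n} with |B| = b and all W, W' ∈ ℝ^{k×d}, the variance-reduced gradient estimator deviation satisfies ‖(1/b)∑_{i∈B} g_i(W) − (1/b)∑_{i∈B} g_i(W') + D(W') − D(W)‖_1 ≤ 2(m−1) R (exp(2R ‖W − W'‖_max) − 1) · G(W). -/

import Mathlib

open Finset Filter

/-- Softmax map on `ℝ^k`. -/
noncomputable def softmax {k : ℕ} (z : Fin k → ℝ) (c : Fin k) : ℝ :=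
  Real.exp (z c) / ∑ j, Real.exp (z j)

/-- Logits `W x` of a linear classifier `W : ℝ^{k×d}` on input `x : ℝ^d`. -/
noncomputable def logits {k d : ℕ} (W : Fin k → Fin d → ℝ) (x : Fin d → ℝ) : Fin k → ℝ :=
  fun c => ∑ j, W c j * x j

/-- Cross-entropy loss `L(W) = -(1/n) ∑ᵢ log S_{yᵢ}(W xᵢ)`. -/
noncomputable def lossCE {n k d : ℕ} (x : Fin n → Fin d → ℝ) (y : Fin n → Fin k)
    (W : Fin k → Fin d → ℝ) : ℝ :=
  -((1 : ℝ) / n) * ∑ i, Real.log (softmax (logits W (x i)) (y i))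

/-- Proxy function `G(W) = (1/n) ∑ᵢ (1 - S_{yᵢ}(W xᵢ))`. -/
noncomputable def proxyG {n k d : ℕ} (x : Fin n → Fin d → ℝ) (y : Fin n → Fin k)
    (W : Fin k → Fin d → ℝ) : ℝ :=
  ((1 : ℝ) / n) * ∑ i, (1 - softmax (logits W (x i)) (y i))

/-- Per-sample gradient matrix `gᵢ(W) = (S(W xᵢ) - e_{yᵢ}) xᵢᵀ`. -/
noncomputable def sampleGrad {k d : ℕ} (x : Fin d → ℝ) (y : Fin k)
    (W : Fin k → Fin d → ℝ) : Fin k → Fin d → ℝ :=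
  fun c j => (softmax (logits W x) c - (if c = y then 1 else 0)) * x j

/-- Full gradient matrix `D(W) = (1/n) ∑ᵢ gᵢ(W)`. -/
noncomputable def gradCE {n k d : ℕ} (x : Fin n → Fin d → ℝ) (y : Fin n → Fin k)
    (W : Fin k → Fin d → ℝ) : Fin k → Fin d → ℝ :=
  fun c j => ((1 : ℝ) / n) * ∑ i, sampleGrad (x i) (y i) W c j

/-- Entry-wise 1-norm of a matrix. -/
noncomputable def norm1M {k d : ℕ} (A : Fin k → Fin d → ℝ) : ℝ :=
  ∑ c, ∑ j, |A c j|

/-- 1-norm of a vector. -/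
noncomputable def norm1V {d : ℕ} (v : Fin d → ℝ) : ℝ := ∑ j, |v j|

/-- `min_{c ≠ y} (e_y - e_c)ᵀ A x`. -/
noncomputable def marginMin {k d : ℕ} (hk : 2 ≤ k) (A : Fin k → Fin d → ℝ)
    (x : Fin d → ℝ) (y : Fin k) : ℝ :=
  (Finset.univ.erase y).inf'
    (by
      obtain ⟨cne, hcne⟩ := Fintype.exists_ne_of_one_lt_card
        (by simpa using (by omega : 1 < k)) y
      exact ⟨cne, Finset.mem_erase.mpr ⟨hcne, Finset.mem_univ _⟩⟩)
    (fun c => logits A x y - logits A x c)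

/-- `min_{i ∈ [n], c ≠ yᵢ} (e_{yᵢ} - e_c)ᵀ W xᵢ`. -/
noncomputable def dataMargin {n k d : ℕ} (hn : 1 ≤ n) (hk : 2 ≤ k)
    (x : Fin n → Fin d → ℝ) (y : Fin n → Fin k) (W : Fin k → Fin d → ℝ) : ℝ :=
  Finset.univ.inf' ⟨⟨0, by omega⟩, Finset.mem_univ _⟩
    (fun i => marginMin hk W (x i) (y i))

/-- Max margin `γ` over the max-norm unit ball. -/
noncomputable def gammaMax {n k d : ℕ} (hn : 1 ≤ n) (hk : 2 ≤ k)
    (x : Fin n → Fin d → ℝ) (y : Fin n → Fin k) : ℝ :=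
  sSup { g : ℝ | ∃ W' : Fin k → Fin d → ℝ, ‖W'‖ ≤ 1 ∧ g = dataMargin hn hk x y W' }

/-- Mini-batch gradient `(1/b) ∑_{i ∈ B} gᵢ(W)`. -/
noncomputable def batchGrad {n k d : ℕ} (x : Fin n → Fin d → ℝ) (y : Fin n → Fin k)
    (B : Finset (Fin n)) (b : ℕ) (W : Fin k → Fin d → ℝ) : Fin k → Fin d → ℝ :=
  fun c j => ((1 : ℝ) / b) * ∑ i ∈ B, sampleGrad (x i) (y i) W c j

/-- Frobenius norm of a matrix. -/
noncomputable def frobNorm {k d : ℕ} (A : Fin k → Fin d → ℝ) : ℝ :=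
  Real.sqrt (∑ c, ∑ j, (A c j) ^ 2)

/-!
The deviation equals `∑ᵢ wᵢ (gᵢ(W) - gᵢ(W'))` with control-variate weights
`wᵢ = 𝟙_B(i)/b - 1/n`, each of absolute value at most `(m - 1)/n`. Each difference
`gᵢ(W) - gᵢ(W')` is the rank-one matrix `(S(W xᵢ) - S(W' xᵢ)) xᵢᵀ`, of entrywise 1-norm
`‖S(W xᵢ) - S(W' xᵢ)‖₁ ‖xᵢ‖₁`. The logits move by at most `δ = R ‖W - W'‖_max`, so
every softmax coordinate changes by a factor in `[e^{-2δ}, e^{2δ}]`; as the change of `S` sums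
to zero, its 1-norm is at most twice the change off the true class, `2 (e^{2δ} - 1)(1 - S_{yᵢ})`.
-/

open Real

theorem sum_abs_le_two_mul_sum_erase_abs {ι : Type*} [Fintype ι] [DecidableEq ι]
    {f : ι → ℝ} (hf : ∑ i, f i = 0) (a : ι) :
    ∑ i, |f i| ≤ 2 * ∑ i ∈ univ.erase a, |f i| := by
  have hfa : f a = -∑ i ∈ univ.erase a, f i := by
    linarith [add_sum_erase univ f (mem_univ a)]
  have hfa_le : |f a| ≤ ∑ i ∈ univ.erase a, |f i| := by
    rw [hfa, abs_neg]
    exact abs_sum_le_sum_abs _ _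
  rw [← add_sum_erase univ (fun i => |f i|) (mem_univ a)]
  linarith

section Softmax

variable {k : ℕ} [NeZero k]

theorem sum_exp_pos (z : Fin k → ℝ) : 0 < ∑ j, exp (z j) :=
  sum_pos (fun _ _ => exp_pos _) univ_nonempty

theorem softmax_pos (z : Fin k → ℝ) (c : Fin k) : 0 < softmax z c :=
  div_pos (exp_pos _) (sum_exp_pos z)

theorem sum_softmax (z : Fin k → ℝ) : ∑ c, softmax z c = 1 := by
  simp only [softmax, ← sum_div, div_self (sum_exp_pos z).ne']

variable {z z' : Fin k → ℝ} {δ : ℝ}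

theorem softmax_le_exp_mul_softmax (h : ∀ c, |z' c - z c| ≤ δ) (c : Fin k) :
    softmax z' c ≤ exp (2 * δ) * softmax z c := by
  have hnum : exp (z' c) ≤ exp δ * exp (z c) := by
    rw [← exp_add]
    exact exp_le_exp.2 (by linarith [(abs_le.1 (h c)).2])
  have hden : exp (-δ) * ∑ j, exp (z j) ≤ ∑ j, exp (z' j) := by
    rw [mul_sum]
    refine sum_le_sum fun j _ => ?_
    rw [← exp_add]
    exact exp_le_exp.2 (by linarith [(abs_le.1 (h j)).1])
  calc softmax z' c ≤ exp δ * exp (z c) / (exp (-δ) * ∑ j, exp (z j)) :=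
        div_le_div₀ (by positivity) hnum (by positivity [sum_exp_pos z]) hden
    _ = exp (2 * δ) * softmax z c := by
        rw [softmax, mul_div_mul_comm, ← exp_sub]
        ring_nf

theorem abs_softmax_sub_le (h : ∀ c, |z' c - z c| ≤ δ) (c : Fin k) :
    |softmax z' c - softmax z c| ≤ (exp (2 * δ) - 1) * softmax z c := by
  have hup := softmax_le_exp_mul_softmax h c
  have hdown := softmax_le_exp_mul_softmax (z := z') (z' := z)
    (fun c => by rw [abs_sub_comm]; exact h c) c
  have hE := exp_pos (2 * δ)
  have hS := (softmax_pos z c).le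
  rw [abs_sub_le_iff]
  refine ⟨by linarith, ?_⟩
  -- `hdown` bounds the decrease by `(1 - e^{-2δ}) S_c(z)`, and `1 - e^{-t} ≤ e^t - 1`.
  nlinarith [mul_nonneg (sq_nonneg (exp (2 * δ) - 1)) hS]

theorem sum_abs_softmax_sub_le (h : ∀ c, |z' c - z c| ≤ δ) (y : Fin k) :
    ∑ c, |softmax z' c - softmax z c| ≤ 2 * (exp (2 * δ) - 1) * (1 - softmax z y) := by
  have hsum : ∑ c, (softmax z' c - softmax z c) = 0 := by
    rw [sum_sub_distrib, sum_softmax, sum_softmax, sub_self]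
  have hrest : ∑ c ∈ univ.erase y, softmax z c = 1 - softmax z y := by
    linarith [add_sum_erase univ (softmax z) (mem_univ y), sum_softmax z]
  calc ∑ c, |softmax z' c - softmax z c|
      ≤ 2 * ∑ c ∈ univ.erase y, |softmax z' c - softmax z c| :=
        sum_abs_le_two_mul_sum_erase_abs hsum y
    _ ≤ 2 * ∑ c ∈ univ.erase y, (exp (2 * δ) - 1) * softmax z c := by
        gcongr with c
        exact abs_softmax_sub_le h c
    _ = 2 * (exp (2 * δ) - 1) * (1 - softmax z y) := by
        rw [← mul_sum, hrest, mul_assoc]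

end Softmax

section Gradients

variable {k d : ℕ}

theorem norm1V_nonneg (v : Fin d → ℝ) : 0 ≤ norm1V v :=
  sum_nonneg fun _ _ => abs_nonneg _

theorem norm1M_nonneg (A : Fin k → Fin d → ℝ) : 0 ≤ norm1M A :=
  sum_nonneg fun _ _ => sum_nonneg fun _ _ => abs_nonneg _

theorem norm1M_sum_mul_le {ι : Type*} [Fintype ι] (w : ι → ℝ)
    (A : ι → Fin k → Fin d → ℝ) :
    norm1M (fun c j => ∑ i, w i * A i c j) ≤ ∑ i, |w i| * norm1M (A i) := by
  calc norm1M (fun c j => ∑ i, w i * A i c j)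
      ≤ ∑ c, ∑ j, ∑ i, |w i| * |A i c j| := by
        unfold norm1M
        gcongr with c _ j
        exact (abs_sum_le_sum_abs _ _).trans_eq (by simp only [abs_mul])
    _ = ∑ i, |w i| * norm1M (A i) := by
        rw [sum_comm_cycle]
        simp only [norm1M, mul_sum]

theorem abs_logits_sub_le (W W' : Fin k → Fin d → ℝ) (x : Fin d → ℝ) (c : Fin k) :
    |logits W x c - logits W' x c| ≤ ‖W - W'‖ * norm1V x := by
  have hentry : ∀ j, |(W - W') c j| ≤ ‖W - W'‖ := fun j =>
    (norm_le_pi_norm ((W - W') c) j).trans (norm_le_pi_norm (W - W') c)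
  calc |logits W x c - logits W' x c| = |∑ j, (W - W') c j * x j| := by
        simp only [logits, ← sum_sub_distrib, Pi.sub_apply, sub_mul]
    _ ≤ ∑ j, ‖W - W'‖ * |x j| := by
        refine (abs_sum_le_sum_abs _ _).trans (sum_le_sum fun j _ => ?_)
        rw [abs_mul]
        exact mul_le_mul_of_nonneg_right (hentry j) (abs_nonneg _)
    _ = ‖W - W'‖ * norm1V x := by rw [norm1V, mul_sum]

theorem norm1M_sampleGrad_sub (x : Fin d → ℝ) (y : Fin k) (W W' : Fin k → Fin d → ℝ) :
    norm1M (sampleGrad x y W - sampleGrad x y W')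
      = (∑ c, |softmax (logits W' x) c - softmax (logits W x) c|) * norm1V x := by
  rw [norm1M, sum_mul]
  refine sum_congr rfl fun c _ => ?_
  simp only [Pi.sub_apply, sampleGrad, sub_sub_sub_cancel_right, ← sub_mul, abs_mul, norm1V,
    mul_sum, abs_sub_comm (softmax (logits W x) c)]

theorem norm1M_sampleGrad_sub_le {x : Fin d → ℝ} {R : ℝ} (hx : norm1V x ≤ R) (y : Fin k)
    (W W' : Fin k → Fin d → ℝ) :
    norm1M (sampleGrad x y W - sampleGrad x y W')
      ≤ 2 * R * (exp (2 * R * ‖W - W'‖) - 1) * (1 - softmax (logits W x) y) := by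
  have : NeZero k := NeZero.of_pos y.pos
  have hR : 0 ≤ R := (norm1V_nonneg x).trans hx
  have hlogits : ∀ c, |logits W' x c - logits W x c| ≤ R * ‖W - W'‖ := fun c => by
    rw [abs_sub_comm, mul_comm]
    exact (abs_logits_sub_le W W' x c).trans
      (mul_le_mul_of_nonneg_left hx (norm_nonneg _))
  have hsoftmax := sum_abs_softmax_sub_le hlogits y
  rw [← mul_assoc] at hsoftmax
  rw [norm1M_sampleGrad_sub]
  calc (∑ c, |softmax (logits W' x) c - softmax (logits W x) c|) * norm1V x
      ≤ (2 * (exp (2 * R * ‖W - W'‖) - 1) * (1 - softmax (logits W x) y)) * R :=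
        mul_le_mul hsoftmax hx (norm1V_nonneg x)
          ((sum_nonneg fun _ _ => abs_nonneg _).trans hsoftmax)
    _ = _ := by ring

end Gradients

section ControlVariate

variable {ι : Type*} [DecidableEq ι]

noncomputable def batchWeight (B : Finset ι) (b n : ℕ) (i : ι) : ℝ :=
  (if i ∈ B then 1 / (b : ℝ) else 0) - 1 / n

theorem abs_batchWeight_le [Fintype ι] {B : Finset ι} {m b n : ℕ} (hB : #B = b)
    (hn : Fintype.card ι = n) (hnb : n = m * b) (i : ι) :
    |batchWeight B b n i| ≤ ((m : ℝ) - 1) / n := by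
  have hn_pos : 0 < n := hn ▸ Fintype.card_pos_iff.2 ⟨i⟩
  have hm_pos : 0 < m := Nat.pos_of_mul_pos_right (hnb ▸ hn_pos)
  have hn_cast : (n : ℝ) = m * b := by exact_mod_cast hnb
  by_cases hi : i ∈ B
  · have hb_pos : 0 < b := hB ▸ card_pos.2 ⟨i, hi⟩
    have hweight : batchWeight B b n i = ((m : ℝ) - 1) / n := by
      rw [batchWeight, if_pos hi, hn_cast]
      field_simp
    rw [hweight, abs_of_nonneg
      (div_nonneg (sub_nonneg.2 (Nat.one_le_cast.2 hm_pos)) (Nat.cast_nonneg n))]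
  · have hb_lt : b < m * b := hnb ▸ hn ▸ hB ▸ card_lt_univ_of_notMem hi
    have hm : (2 : ℝ) ≤ m := by
      exact_mod_cast one_lt_of_lt_mul_right₀ (Nat.zero_le b) hb_lt
    rw [batchWeight, if_neg hi, zero_sub, abs_neg, abs_of_nonneg (by positivity)]
    gcongr
    linarith

end ControlVariate

theorem batchGrad_sub_add_gradCE_sub {n k d : ℕ} (x : Fin n → Fin d → ℝ)
    (y : Fin n → Fin k) (B : Finset (Fin n)) (b : ℕ) (W W' : Fin k → Fin d → ℝ) :
    batchGrad x y B b W - batchGrad x y B b W' + gradCE x y W' - gradCE x y W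
      = fun c j => ∑ i, batchWeight B b n i
          * (sampleGrad (x i) (y i) W - sampleGrad (x i) (y i) W') c j := by
  funext c j
  simp only [Pi.add_apply, Pi.sub_apply, batchGrad, gradCE, batchWeight, sub_mul, ite_mul,
    zero_mul, sum_sub_distrib, sum_ite_mem, univ_inter, mul_sub, mul_sum]
  ring

theorem variance_reduced_deviation_bound_general (n k d : ℕ)
    (x : Fin n → Fin d → ℝ) (y : Fin n → Fin k)
    (R : ℝ) (hx : ∀ i, norm1V (x i) ≤ R)
    (m b : ℕ) (hnb : n = m * b)
    (B : Finset (Fin n)) (hB : B.card = b)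
    (W W' : Fin k → Fin d → ℝ) :
    norm1M (batchGrad x y B b W - batchGrad x y B b W' + gradCE x y W' - gradCE x y W)
      ≤ 2 * ((m : ℝ) - 1) * R * (Real.exp (2 * R * ‖W - W'‖) - 1) * proxyG x y W := by
  have hweight := abs_batchWeight_le hB (Fintype.card_fin n) hnb
  have hsample i := norm1M_sampleGrad_sub_le (hx i) (y i) W W'
  rw [batchGrad_sub_add_gradCE_sub]
  calc _ ≤ ∑ i, |batchWeight B b n i|
          * norm1M (sampleGrad (x i) (y i) W - sampleGrad (x i) (y i) W') :=
        norm1M_sum_mul_le _ _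
    _ ≤ ∑ i, ((m : ℝ) - 1) / n * (2 * R * (exp (2 * R * ‖W - W'‖) - 1)
          * (1 - softmax (logits W (x i)) (y i))) :=
        sum_le_sum fun i _ => mul_le_mul (hweight i) (hsample i) (norm1M_nonneg _)
          ((abs_nonneg _).trans (hweight i))
    _ = _ := by
        rw [← mul_sum, ← mul_sum, proxyG]
        ring

/-- deviation bound for the variance-reduced gradient estimator:
`‖(1/b)∑_{i∈B} gᵢ(W) − (1/b)∑_{i∈B} gᵢ(W') + D(W') − D(W)‖₁
  ≤ 2(m−1)R (exp(2R‖W − W'‖_max) − 1) G(W)`. -/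
theorem variance_reduced_deviation_bound (n k d : ℕ)
    (hn : 1 ≤ n) (hk : 2 ≤ k) (hd : 1 ≤ d)
    (x : Fin n → Fin d → ℝ) (y : Fin n → Fin k)
    (R : ℝ) (hR : 0 < R) (hx : ∀ i, norm1V (x i) ≤ R)
    (m b : ℕ) (hm : 1 ≤ m) (hb : 1 ≤ b) (hnb : n = m * b)
    (B : Finset (Fin n)) (hB : B.card = b)
    (W W' : Fin k → Fin d → ℝ) :
    norm1M (batchGrad x y B b W - batchGrad x y B b W' + gradCE x y W' - gradCE x y W)
      ≤ 2 * ((m : ℝ) - 1) * R * (Real.exp (2 * R * ‖W - W'‖) - 1) * proxyG x y W :=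
  variance_reduced_deviation_bound_general n k d x y R hx m b hnb B hB W W'
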